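/- Let G be a k-partite k-uniform hypergraph and define G_i = (E, E_i) for i ∈ [k] as the graph on hyperedges where e, e' are adjacent iff they share a vertex in a part V_j with j ≠ i. Suppose G is vertex-separable and for each i assign to each hyperedge e the label c_i(e) ∈ ℕ of its connected component in G_i. Then the map e ↦ (c_1(e), …, c_k(e)) is injective on E. -/

import Mathlib

/-- A `k`-partite `k`-uniform hypergraph: vertices `V` with parts indexed by `Fin k`,
hyperedges indexed by `E`, each hyperedge selecting exactly one vertex per part. -/
structure KHypergraph (k : ℕ) (V E : Type) where
  part : V → Fin k
  vert : E → Fin k → V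
  hpart : ∀ e i, part (vert e i) = i

namespace KHypergraph

variable {k : ℕ} {V E : Type}

/-- Vertex `v` belongs to hyperedge `e`. -/
def Mem (G : KHypergraph k V E) (v : V) (e : E) : Prop :=
  G.vert e (G.part v) = v

/-- Two vertices are adjacent if they are both contained in a common hyperedge. -/
def Adj (G : KHypergraph k V E) (u v : V) : Prop :=
  ∃ e : E, G.Mem u e ∧ G.Mem v e

/-- `l` is an `s`–`t` path: a nonempty sequence of vertices starting at `s`, ending at `t`,
with consecutive vertices contained in a common hyperedge. -/
def IsPath (G : KHypergraph k V E) (s t : V) (l : List V) : Prop :=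
  l.Chain' G.Adj ∧ l.head? = some s ∧ l.getLast? = some t

/-- Vertex separability: every two distinct vertices of the same part `V_i` can be
separated by removing some part `V_j`, `j ≠ i`. -/
def VertexSeparable (G : KHypergraph k V E) : Prop :=
  ∀ v v' : V, v ≠ v' → G.part v = G.part v' →
    ∃ j : Fin k, j ≠ G.part v ∧
      ∀ l : List V, G.IsPath v v' l → ∃ w ∈ l, G.part w = j

/-- Edge separability: every two distinct hyperedges can be separated by removing
some part `V_j`. -/
def EdgeSeparable (G : KHypergraph k V E) : Prop :=
  ∀ e e' : E, G.vert e ≠ G.vert e' →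
    ∃ j : Fin k, ∀ (v v' : V) (l : List V), G.Mem v e → G.Mem v' e' →
      G.IsPath v v' l → ∃ w ∈ l, G.part w = j

/-- The axis-parallel line in `ℝ^k` representing a vertex `v` of part `i = G.part v`:
all coordinates `j ≠ i` are fixed to `L v j`, coordinate `i` is free. -/
def lineOf (G : KHypergraph k V E) (L : V → Fin k → ℝ) (v : V) : Set (Fin k → ℝ) :=
  {x | ∀ j : Fin k, j ≠ G.part v → x j = L v j}

/-- `(p, L)` is an axis-parallel point line cover representation of `G` in `ℝ^k`:
hyperedges map to pairwise distinct points, vertices map to pairwise distinct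
axis-parallel lines (part `V_i` to direction `i`), and hypergraph incidence coincides
with geometric incidence. -/
def Represents (G : KHypergraph k V E) (p : E → Fin k → ℝ) (L : V → Fin k → ℝ) : Prop :=
  Function.Injective p ∧
  (∀ v v' : V, v ≠ v' → G.lineOf L v ≠ G.lineOf L v') ∧
  (∀ (v : V) (e : E), G.Mem v e ↔ p e ∈ G.lineOf L v)

/-- The auxiliary graph `G_i` on the hyperedges: `e` and `e'` are adjacent iff they
share a vertex in a part `V_j` with `j ≠ i`. -/
def GiAdj (G : KHypergraph k V E) (i : Fin k) (e e' : E) : Prop :=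
  ∃ v : V, G.Mem v e ∧ G.Mem v e' ∧ G.part v ≠ i

end KHypergraph

/-! If two distinct hyperedges `e`, `e'` lie in the same component of `G_j` for every `j`, pick
a part `i` where they differ. Walking along a chain of `G_j`-adjacent hyperedges through their
shared vertices outside `V_j` gives a path from `e`'s vertex in `V_i` to `e'`'s vertex in `V_i`
that avoids `V_j`; taking `j` to be the part that separates these two vertices is a
contradiction. -/

namespace KHypergraph

variable {k : ℕ} {V E : Type} (G : KHypergraph k V E)

theorem mem_vert (e : E) (i : Fin k) : G.Mem (G.vert e i) e := by
  rw [Mem, G.hpart]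

variable {G}

theorem IsPath.concat {s t u : V} {l : List V} (hl : G.IsPath s t l) (htu : G.Adj t u) :
    G.IsPath s u (l ++ [u]) := by
  obtain ⟨hchain, hhead, hlast⟩ := hl
  have hne : l ≠ [] := by rintro rfl; simp at hhead
  refine ⟨hchain.append (List.isChain_singleton u) ?_, ?_, List.getLast?_concat⟩
  · simp only [hlast, List.head?_cons, Option.mem_def, Option.some_inj]
    rintro _ rfl _ rfl
    exact htu
  · rw [List.head?_append_of_ne_nil _ hne, hhead]

theorem IsPath.pair {u v : V} (huv : G.Adj u v) : G.IsPath u v [u, v] :=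
  ⟨List.isChain_pair.2 huv, rfl, rfl⟩

theorem exists_isPath_of_reflTransGen_giAdj {j : Fin k} {e e' : E}
    (h : Relation.ReflTransGen (G.GiAdj j) e e') {v v' : V} (hv : G.Mem v e) (hv' : G.Mem v' e')
    (hvj : G.part v ≠ j) (hv'j : G.part v' ≠ j) :
    ∃ l, G.IsPath v v' l ∧ ∀ w ∈ l, G.part w ≠ j := by
  induction h generalizing v' with
  | refl => exact ⟨[v, v'], .pair ⟨e, hv, hv'⟩, by simp [hvj, hv'j]⟩
  | tail _ hstep ih =>
    obtain ⟨w, hw, hw', hwj⟩ := hstep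
    obtain ⟨l, hl, havoid⟩ := ih hw hwj
    refine ⟨l ++ [v'], hl.concat ⟨_, hw', hv'⟩, ?_⟩
    simpa [or_imp, forall_and] using ⟨havoid, hv'j⟩

theorem vert_eq_of_forall_reflTransGen_giAdj (hsep : G.VertexSeparable) {e e' : E}
    (h : ∀ j, Relation.ReflTransGen (G.GiAdj j) e e') : G.vert e = G.vert e' := by
  by_contra hne
  obtain ⟨i, hi⟩ := Function.ne_iff.1 hne
  have hpart : G.part (G.vert e i) = G.part (G.vert e' i) := by rw [G.hpart, G.hpart]
  obtain ⟨j, hji, hcut⟩ := hsep _ _ hi hpart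
  have hj' : G.part (G.vert e' i) ≠ j := hpart ▸ hji.symm
  obtain ⟨l, hl, havoid⟩ :=
    exists_isPath_of_reflTransGen_giAdj (h j) (G.mem_vert e i) (G.mem_vert e' i) hji.symm hj'
  obtain ⟨w, hwl, hwj⟩ := hcut l hl
  exact havoid w hwl hwj

end KHypergraph

/-- If `G` is vertex-separable (with hyperedges pairwise distinct as vertex sets) and
`c i e` is a labeling of the hyperedges by their connected components in the auxiliary
graphs `G_i`, then the map `e ↦ (c 1 e, …, c k e)` is injective on `E`. -/
theorem stmt16 {k : ℕ} {V E : Type} (G : KHypergraph k V E)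
    (hdist : Function.Injective G.vert) (hsep : G.VertexSeparable)
    (c : Fin k → E → ℕ)
    (hc : ∀ (i : Fin k) (e e' : E),
      c i e = c i e' ↔ Relation.ReflTransGen (G.GiAdj i) e e') :
    Function.Injective (fun e : E => fun i : Fin k => c i e) := by
  intro e e' h
  exact hdist <| G.vert_eq_of_forall_reflTransGen_giAdj hsep fun j => (hc j e e').1 (congrFun h j)
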